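/- arXiv:1801.10107 — 4 statements merged into one kernel-verified Lean document; each statement's English description precedes it below -/
import Mathlib

section
/- Let X be a standard Borel space, Q an analytic quasi-order on X, E_Q the equivalence relation defined by x E_Q y iff x Q y and y Q x, and E an analytic equivalence relation on X with E contained in E_Q. If for every Polish space Y and every analytic quasi-order P on Y there is an E-invariant Borel subset A ⊆ X such that P is Borel bi-reducible with the restriction of Q to A, then for every Polish space Y and every analytic equivalence relation D on Y there is an E-invariant Borel subset A ⊆ X such that D is Borel bi-reducible with the restriction of E_Q to A. (In other words, if (Q, E) is an invariantly universal quasi-order, then (E_Q, E) is an invariantly universal equivalence relation.) -/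
/-! An analytic equivalence relation `D` is in particular an analytic quasi-order, so universality
of `Q` gives a Borel `E`-invariant `A` with `D` bi-reducible to `Q` restricted to `A`. Since `D` is
symmetric, every reduction between `D` and `Q` is already a reduction between `D` and `E_Q`. -/

/-- A subset of a measurable (standard Borel) space is analytic if it is the projection of a
Borel subset of the product with a Polish space. -/
def IsAnalyticSet {X : Type*} [MeasurableSpace X] (S : Set X) : Prop :=
  ∃ (Z : Type) (tZ : TopologicalSpace Z), @PolishSpace Z tZ ∧
    ∃ B : Set (Z × X), @MeasurableSet (Z × X) (@Prod.instMeasurableSpace Z X (@borel Z tZ) _) B ∧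
      S = Prod.snd '' B

/-- A binary relation is analytic if it is analytic as a subset of the product space. -/
def IsAnalyticRel {X : Type*} [MeasurableSpace X] (R : X → X → Prop) : Prop :=
  IsAnalyticSet {p : X × X | R p.1 p.2}

/-- `P` Borel reduces to the restriction of `Q` to `A`: a Borel (measurable) map taking values
in `A` and witnessing `y P y' ↔ f y Q f y'`. -/
def ReducesToRestr {Y X : Type*} [MeasurableSpace Y] [MeasurableSpace X]
    (P : Y → Y → Prop) (Q : X → X → Prop) (A : Set X) : Prop :=
  ∃ f : Y → X, Measurable f ∧ (∀ y, f y ∈ A) ∧ ∀ y y', P y y' ↔ Q (f y) (f y')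

/-- The restriction of `Q` to `A` Borel reduces to `P`. -/
def RestrReducesTo {Y X : Type*} [MeasurableSpace Y] [MeasurableSpace X]
    (P : Y → Y → Prop) (Q : X → X → Prop) (A : Set X) : Prop :=
  ∃ g : A → Y, Measurable g ∧ ∀ a b : A, Q a.1 b.1 ↔ P (g a) (g b)

/-- `P` is Borel bi-reducible with the restriction of `Q` to `A`. -/
def BiReducibleRestr {Y X : Type*} [MeasurableSpace Y] [MeasurableSpace X]
    (P : Y → Y → Prop) (Q : X → X → Prop) (A : Set X) : Prop :=
  ReducesToRestr P Q A ∧ RestrReducesTo P Q A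

theorem ReducesToRestr.symmetrize {Y X : Type*} [MeasurableSpace Y] [MeasurableSpace X]
    {P : Y → Y → Prop} {Q : X → X → Prop} {A : Set X} (hP : ∀ y y', P y y' → P y' y)
    (h : ReducesToRestr P Q A) : ReducesToRestr P (fun x y => Q x y ∧ Q y x) A := by
  obtain ⟨f, hf, hfA, hPQ⟩ := h
  exact ⟨f, hf, hfA, fun y y' =>
    ⟨fun hyy' => ⟨(hPQ y y').mp hyy', (hPQ y' y).mp (hP y y' hyy')⟩,
      fun hQ => (hPQ y y').mpr hQ.1⟩⟩

theorem RestrReducesTo.symmetrize {Y X : Type*} [MeasurableSpace Y] [MeasurableSpace X]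
    {P : Y → Y → Prop} {Q : X → X → Prop} {A : Set X} (hP : ∀ y y', P y y' → P y' y)
    (h : RestrReducesTo P Q A) : RestrReducesTo P (fun x y => Q x y ∧ Q y x) A := by
  obtain ⟨g, hg, hQP⟩ := h
  exact ⟨g, hg, fun a b =>
    ⟨fun hQ => (hQP a b).mp hQ.1,
      fun hab => ⟨(hQP a b).mpr hab, (hQP b a).mpr (hP _ _ hab)⟩⟩⟩

theorem BiReducibleRestr.symmetrize {Y X : Type*} [MeasurableSpace Y] [MeasurableSpace X]
    {P : Y → Y → Prop} {Q : X → X → Prop} {A : Set X} (hP : ∀ y y', P y y' → P y' y)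
    (h : BiReducibleRestr P Q A) : BiReducibleRestr P (fun x y => Q x y ∧ Q y x) A :=
  ⟨h.1.symmetrize hP, h.2.symmetrize hP⟩

theorem invariantly_universal_quasi_order_to_equiv_relation_general
    (X : Type) [MeasurableSpace X]
    (Q : X → X → Prop)
    (E : X → X → Prop)
    (huniv : ∀ (Y : Type) [TopologicalSpace Y] [PolishSpace Y]
        [MeasurableSpace Y] [BorelSpace Y] (P : Y → Y → Prop),
        Reflexive P → Transitive P → IsAnalyticRel P →
        ∃ A : Set X, MeasurableSet A ∧ (∀ x y, x ∈ A → E x y → y ∈ A) ∧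
          BiReducibleRestr P Q A) :
    ∀ (Y : Type) [TopologicalSpace Y] [PolishSpace Y]
      [MeasurableSpace Y] [BorelSpace Y] (D : Y → Y → Prop),
      Equivalence D → IsAnalyticRel D →
      ∃ A : Set X, MeasurableSet A ∧ (∀ x y, x ∈ A → E x y → y ∈ A) ∧
        BiReducibleRestr D (fun x y => Q x y ∧ Q y x) A := by
  intro Y _ _ _ _ D hD hDan
  obtain ⟨A, hA, hAinv, hDA⟩ :=
    huniv Y D (fun y => hD.refl y) (fun _ _ _ => hD.trans) hDan
  exact ⟨A, hA, hAinv, hDA.symmetrize fun _ _ => hD.symm⟩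

/-- **If `(Q, E)` is an invariantly universal quasi-order, then `(E_Q, E)` is an invariantly
universal equivalence relation.** Here `X` is a standard Borel space, `Q` an analytic
quasi-order on `X`, `E_Q` the equivalence relation `x E_Q y ↔ x Q y ∧ y Q x`, and `E` an
analytic equivalence subrelation of `E_Q`. -/
theorem invariantly_universal_quasi_order_to_equiv_relation
    (X : Type) [MeasurableSpace X] [StandardBorelSpace X]
    (Q : X → X → Prop) (hQrefl : Reflexive Q) (hQtrans : Transitive Q)
    (hQan : IsAnalyticRel Q)
    (E : X → X → Prop) (hE : Equivalence E) (hEan : IsAnalyticRel E)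
    (hsub : ∀ x y, E x y → Q x y ∧ Q y x)
    (huniv : ∀ (Y : Type) [TopologicalSpace Y] [PolishSpace Y]
        [MeasurableSpace Y] [BorelSpace Y] (P : Y → Y → Prop),
        Reflexive P → Transitive P → IsAnalyticRel P →
        ∃ A : Set X, MeasurableSet A ∧ (∀ x y, x ∈ A → E x y → y ∈ A) ∧
          BiReducibleRestr P Q A) :
    ∀ (Y : Type) [TopologicalSpace Y] [PolishSpace Y]
      [MeasurableSpace Y] [BorelSpace Y] (D : Y → Y → Prop),
      Equivalence D → IsAnalyticRel D →
      ∃ A : Set X, MeasurableSet A ∧ (∀ x y, x ∈ A → E x y → y ∈ A) ∧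
        BiReducibleRestr D (fun x y => Q x y ∧ Q y x) A :=
  invariantly_universal_quasi_order_to_equiv_relation_general X Q E huniv
end

section
/- The isomorphism relation on countable graphs SPB reduces to the isomorphism relation on countable partial orders: there exists a Borel map f : X_Gr → X_PO such that for all g, g' ∈ X_Gr, g ≅_Gr g' if and only if f g ≅_PO f g', and for every g ∈ X_Gr the groups Aut(g) and Aut(f g) are isomorphic. -/
/-- Codes for countable graphs on domain `ℕ`: the edge relation as a function `ℕ → ℕ → Bool`. -/
abbrev GCode : Type := ℕ → ℕ → Bool

/-- `g` codes a graph: symmetric and irreflexive. -/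
def GCode.IsGraph (g : GCode) : Prop := (∀ m n, g m n = g n m) ∧ ∀ n, g n n = false

/-- `X_Gr`: the standard Borel space of (codes of) countable graphs. -/
def XGr : Set GCode := {g | g.IsGraph}

/-- Isomorphism of graph codes: a permutation of `ℕ` respecting the edge relations. -/
def GCode.Iso (g g' : GCode) : Prop := ∃ σ : Equiv.Perm ℕ, ∀ m n, g m n = g' (σ m) (σ n)

/-- Embeddability of graph codes: an injection of `ℕ` respecting the edge relations. -/
def GCode.Emb (g g' : GCode) : Prop :=
  ∃ h : ℕ → ℕ, Function.Injective h ∧ ∀ m n, g m n = g' (h m) (h n)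

/-- The automorphism group of a graph code: permutations of `ℕ` preserving the edge
relation. -/
def GCode.Aut (g : GCode) : Subgroup (Equiv.Perm ℕ) where
  carrier := {σ : Equiv.Perm ℕ | ∀ m n, g m n = g (σ m) (σ n)}
  one_mem' := fun _ _ => rfl
  mul_mem' := by
    intro σ τ hσ hτ m n
    simpa [Equiv.Perm.mul_apply] using (hτ m n).trans (hσ (τ m) (τ n))
  inv_mem' := by
    intro σ hσ m n
    have := hσ (σ⁻¹ m) (σ⁻¹ n)
    simpa [Equiv.Perm.coe_inv, Equiv.apply_symm_apply] using this.symm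

/-- Codes for countable partial orders on domain `ℕ`. -/
abbrev POCode : Type := ℕ → ℕ → Bool

/-- `r` codes a partial order: reflexive, antisymmetric and transitive. -/
def POCode.IsPO (r : POCode) : Prop :=
  (∀ a, r a a = true) ∧ (∀ a b, r a b = true → r b a = true → a = b) ∧
  (∀ a b c, r a b = true → r b c = true → r a c = true)

/-- `X_PO`: the standard Borel space of (codes of) countable partial orders. -/
def XPO : Set POCode := {r | r.IsPO}

/-- Isomorphism of partial order codes. -/
def POCode.Iso (r r' : POCode) : Prop := ∃ σ : Equiv.Perm ℕ, ∀ a b, r a b = r' (σ a) (σ b)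

/-- The automorphism group of a partial order code. -/
def POCode.Aut (r : POCode) : Subgroup (Equiv.Perm ℕ) where
  carrier := {σ : Equiv.Perm ℕ | ∀ a b, r a b = r (σ a) (σ b)}
  one_mem' := fun _ _ => rfl
  mul_mem' := by
    intro σ τ hσ hτ a b
    simpa [Equiv.Perm.mul_apply] using (hτ a b).trans (hσ (τ a) (τ b))
  inv_mem' := by
    intro σ hσ a b
    have := hσ (σ⁻¹ a) (σ⁻¹ b)
    simpa [Equiv.Perm.coe_inv, Equiv.apply_symm_apply] using this.symm

/-!
A graph `G` on `V` is encoded by its incidence poset: the vertices at the bottom, above them one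
point for every pair `{a, b}` of distinct vertices, and a top element lying above exactly the pairs
that are edges of `G` (hence also above the non-isolated vertices). As soon as `V` has two points,
the vertices are the minimal elements that are not maximal, the pairs are the non-minimal elements
all of whose strict lower bounds are minimal, and a pair is an edge iff it is not maximal. So every
order isomorphism between incidence posets is induced by a unique graph isomorphism, which gives
both the reduction and the isomorphism of automorphism groups.

For `V = ℕ` the incidence poset is countably infinite, and one enumeration of its carrier, the same
for every graph, turns it into a code. Each relation `x ≤ y` is then constant, an edge relation, or
a countable union of edge relations, so the coding is Borel.
-/

noncomputable section

namespace SimpleGraph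

variable {V W : Type*}

def IncidencePoset (_G : SimpleGraph V) : Type _ :=
  V ⊕ (completeGraph V).edgeSet ⊕ Unit

lemma mem_support_of_mem_edgeSet {G : SimpleGraph V} {e : Sym2 V} (he : e ∈ G.edgeSet) {v : V}
    (hv : v ∈ e) : v ∈ G.support :=
  Set.mem_sym2_iff_subset.1 (edgeSet_subset_sym2_iff.2 subset_rfl he) hv

lemma Iso.apply_mem_support_iff {G : SimpleGraph V} {G' : SimpleGraph W} (f : G ≃g G') {v : V} :
    f v ∈ G'.support ↔ v ∈ G.support := by
  simp [mem_support, f.surjective.exists, f.map_adj_iff]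

namespace IncidencePoset

variable {G : SimpleGraph V} {G' : SimpleGraph W}

def vertex (v : V) : G.IncidencePoset := Sum.inl v

def pair (s : (completeGraph V).edgeSet) : G.IncidencePoset := Sum.inr (Sum.inl s)

def top : G.IncidencePoset := Sum.inr (Sum.inr ())

@[elab_as_elim, induction_eliminator]
protected def induction {motive : G.IncidencePoset → Sort*} (vertex : ∀ v, motive (vertex v))
    (pair : ∀ s, motive (pair s)) (top : motive top) : ∀ x, motive x
  | Sum.inl v => vertex v
  | Sum.inr (Sum.inl s) => pair s
  | Sum.inr (Sum.inr ()) => top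

protected def Le (G : SimpleGraph V) : G.IncidencePoset → G.IncidencePoset → Prop
  | Sum.inl v, Sum.inl w => v = w
  | Sum.inl v, Sum.inr (Sum.inl s) => v ∈ s.1
  | Sum.inl v, Sum.inr (Sum.inr ()) => v ∈ G.support
  | Sum.inr (Sum.inl s), Sum.inr (Sum.inl t) => s = t
  | Sum.inr (Sum.inl s), Sum.inr (Sum.inr ()) => s.1 ∈ G.edgeSet
  | Sum.inr (Sum.inr ()), Sum.inr (Sum.inr ()) => True
  | _, _ => False

instance : LE G.IncidencePoset := ⟨IncidencePoset.Le G⟩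

variable {v w : V} {s t : (completeGraph V).edgeSet}

@[simp] lemma vertex_le_vertex : (vertex v : G.IncidencePoset) ≤ vertex w ↔ v = w := Iff.rfl
@[simp] lemma vertex_le_pair : (vertex v : G.IncidencePoset) ≤ pair s ↔ v ∈ s.1 := Iff.rfl
@[simp] lemma vertex_le_top : (vertex v : G.IncidencePoset) ≤ top ↔ v ∈ G.support := Iff.rfl
@[simp] lemma pair_le_pair : (pair s : G.IncidencePoset) ≤ pair t ↔ s = t := Iff.rfl
@[simp] lemma pair_le_top : (pair s : G.IncidencePoset) ≤ top ↔ s.1 ∈ G.edgeSet := Iff.rfl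
@[simp] lemma top_le_top : (top : G.IncidencePoset) ≤ top := trivial
@[simp] lemma not_pair_le_vertex : ¬ (pair s : G.IncidencePoset) ≤ vertex v := id
@[simp] lemma not_top_le_vertex : ¬ (top : G.IncidencePoset) ≤ vertex v := id
@[simp] lemma not_top_le_pair : ¬ (top : G.IncidencePoset) ≤ pair s := id

instance : PartialOrder G.IncidencePoset where
  le_refl x := by induction x <;> simp
  le_trans x y z := by
    induction x <;> induction y <;> induction z <;> simp <;> grind [mem_support_of_mem_edgeSet]
  le_antisymm x y := by
    induction x <;> induction y <;> simp <;> grind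

lemma vertex_injective : Function.Injective (vertex : V → G.IncidencePoset) :=
  fun _ _ => Sum.inl.inj

@[simp] lemma vertex_ne_pair : (vertex v : G.IncidencePoset) ≠ pair s := Sum.inl_ne_inr
@[simp] lemma vertex_ne_top : (vertex v : G.IncidencePoset) ≠ top := Sum.inl_ne_inr
@[simp] lemma pair_ne_top : (pair s : G.IncidencePoset) ≠ top :=
  fun h => Sum.inl_ne_inr (Sum.inr.inj h)

@[simp] lemma pair_lt_top : (pair s : G.IncidencePoset) < top ↔ s.1 ∈ G.edgeSet := by
  simp [lt_iff_le_not_ge]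

lemma isMin_vertex (v : V) : IsMin (vertex v : G.IncidencePoset) := by
  intro y hy
  induction y <;> simp_all

lemma isMax_top : IsMax (top : G.IncidencePoset) := by
  intro y hy
  induction y <;> simp_all

lemma not_isMax_vertex [Nontrivial V] (v : V) : ¬ IsMax (vertex v : G.IncidencePoset) := by
  obtain ⟨w, hw⟩ := exists_ne v
  intro h
  simpa using h (show vertex v ≤ pair (G := G) ⟨s(v, w), by simpa using hw.symm⟩ by simp)

lemma not_isMin_pair (s : (completeGraph V).edgeSet) : ¬ IsMin (pair s : G.IncidencePoset) := by
  obtain ⟨s, hs⟩ := s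
  induction s using Sym2.ind with
  | h v w =>
    intro h
    simpa using h (show vertex v ≤ pair (G := G) ⟨s(v, w), hs⟩ by simp)

lemma isMax_pair_iff : IsMax (pair s : G.IncidencePoset) ↔ s.1 ∉ G.edgeSet := by
  refine ⟨fun h hs => by simpa using h (pair_le_top.2 hs), fun h y hy => ?_⟩
  induction y <;> simp_all

lemma exists_pair_lt_of_not_isMin_top (h : ¬ IsMin (top : G.IncidencePoset)) :
    ∃ s, (pair s : G.IncidencePoset) < top := by
  simp only [IsMin, not_forall] at h
  obtain ⟨y, hy, hny⟩ := h
  induction y with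
  | vertex v =>
    obtain ⟨w, hvw⟩ := G.mem_support.1 hy
    exact ⟨⟨s(v, w), G.edgeSet_mono le_top hvw⟩, pair_lt_top.2 hvw⟩
  | pair s => exact ⟨s, lt_of_le_not_ge hy hny⟩
  | top => exact (hny hy).elim

lemma mem_range_vertex_iff [Nontrivial V] {x : G.IncidencePoset} :
    x ∈ Set.range vertex ↔ IsMin x ∧ ¬ IsMax x := by
  induction x with
  | vertex v => exact iff_of_true (Set.mem_range_self v) ⟨isMin_vertex v, not_isMax_vertex v⟩
  | pair s => exact iff_of_false (by rintro ⟨v, hv⟩; simp at hv) (fun h => not_isMin_pair s h.1)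
  | top => exact iff_of_false (by rintro ⟨v, hv⟩; simp at hv) (fun h => h.2 isMax_top)

lemma mem_range_pair_iff {x : G.IncidencePoset} :
    x ∈ Set.range pair ↔ ¬ IsMin x ∧ ∀ y < x, IsMin y := by
  induction x with
  | vertex v => simp [isMin_vertex, eq_comm]
  | pair s =>
    refine iff_of_true (Set.mem_range_self s) ⟨not_isMin_pair s, fun y hy => ?_⟩
    induction y with
    | vertex v => exact isMin_vertex v
    | pair t => exact absurd (congrArg pair (pair_le_pair.1 hy.le)) hy.ne
    | top => exact absurd hy.le (by simp)
  | top =>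
    simp only [Set.mem_range, pair_ne_top, exists_false, false_iff, not_and, not_forall]
    intro h
    obtain ⟨s, hs⟩ := exists_pair_lt_of_not_isMin_top h
    exact ⟨pair s, hs, not_isMin_pair s⟩

lemma eq_top_of_notMem_range {x : G.IncidencePoset} (hv : x ∉ Set.range vertex)
    (hp : x ∉ Set.range pair) : x = top := by
  induction x with
  | vertex v => exact (hv ⟨v, rfl⟩).elim
  | pair s => exact (hp ⟨s, rfl⟩).elim
  | top => rfl

theorem measurable_le {X : Type*} [MeasurableSpace X] [Countable V]
    {G : X → SimpleGraph V} (hG : ∀ a b, Measurable fun t => (G t).Adj a b)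
    (x y : V ⊕ (completeGraph V).edgeSet ⊕ Unit) :
    Measurable fun t => IncidencePoset.Le (G t) x y := by
  have hE (e : Sym2 V) : Measurable fun t => e ∈ (G t).edgeSet := by
    induction e using Sym2.ind with | h a b => exact hG a b
  rcases x with v | s | ⟨⟩ <;> rcases y with w | s' | ⟨⟩ <;>
    simp only [IncidencePoset.Le, mem_support]
  all_goals first | exact measurable_const | exact hE _ | exact Measurable.exists fun w => hG v w

variable (σ : V ≃ W)

def pairEquiv : (completeGraph V).edgeSet ≃ (completeGraph W).edgeSet :=
  (Iso.completeGraph σ).mapEdgeSet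

@[simp] lemma coe_pairEquiv (s : (completeGraph V).edgeSet) :
    (pairEquiv σ s : Sym2 W) = s.1.map σ :=
  rfl

def mapEquiv : G.IncidencePoset ≃ G'.IncidencePoset :=
  Equiv.sumCongr σ (Equiv.sumCongr (pairEquiv σ) (Equiv.refl Unit))

@[simp] lemma mapEquiv_vertex (v : V) :
    (mapEquiv σ (vertex v : G.IncidencePoset) : G'.IncidencePoset) = vertex (σ v) := rfl

@[simp] lemma mapEquiv_pair (s : (completeGraph V).edgeSet) :
    (mapEquiv σ (pair s : G.IncidencePoset) : G'.IncidencePoset) = pair (pairEquiv σ s) := rfl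

@[simp] lemma mapEquiv_top : (mapEquiv σ (top : G.IncidencePoset) : G'.IncidencePoset) = top := rfl

end IncidencePoset

open IncidencePoset

variable {G : SimpleGraph V} {G' : SimpleGraph W}

def Iso.incidencePoset (f : G ≃g G') : G.IncidencePoset ≃o G'.IncidencePoset where
  toEquiv := mapEquiv f.toEquiv
  map_rel_iff' {x y} := by
    induction x <;> induction y <;> simp [Sym2.mem_map, f.apply_mem_support_iff]
    exact f.map_mem_edgeSet_iff

namespace IncidencePoset

variable (τ : G.IncidencePoset ≃o G'.IncidencePoset)

lemma apply_mem_range_vertex_iff [Nontrivial V] [Nontrivial W] {x : G.IncidencePoset} :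
    τ x ∈ Set.range vertex ↔ x ∈ Set.range vertex := by
  rw [mem_range_vertex_iff, mem_range_vertex_iff, τ.isMin_apply, τ.isMax_apply]

lemma apply_mem_range_pair_iff {x : G.IncidencePoset} :
    τ x ∈ Set.range pair ↔ x ∈ Set.range pair := by
  rw [mem_range_pair_iff, mem_range_pair_iff, τ.isMin_apply]
  simp only [τ.surjective.forall, τ.lt_iff_lt, τ.isMin_apply]

variable [Nontrivial V] [Nontrivial W]

def vertexEquiv : V ≃ W :=
  (Equiv.ofInjective _ vertex_injective).trans <|
    (τ.toEquiv.subtypeEquiv fun _ => (apply_mem_range_vertex_iff τ).symm).trans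
      (Equiv.ofInjective _ vertex_injective).symm

lemma apply_vertex (v : V) : τ (vertex v) = vertex (vertexEquiv τ v) :=
  (Equiv.apply_ofInjective_symm vertex_injective
    ⟨τ (vertex v), (apply_mem_range_vertex_iff τ).2 ⟨v, rfl⟩⟩).symm

lemma apply_pair (s : (completeGraph V).edgeSet) :
    τ (pair s) = pair (pairEquiv (vertexEquiv τ) s) := by
  obtain ⟨t, ht⟩ := (apply_mem_range_pair_iff τ).2 ⟨s, rfl⟩
  have hmem : ∀ w, w ∈ t.1 ↔ w ∈ (pairEquiv (vertexEquiv τ) s).1 := by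
    intro w
    obtain ⟨v, rfl⟩ := (vertexEquiv τ).surjective w
    rw [← vertex_le_pair (G := G'), ht, ← apply_vertex, τ.le_iff_le]
    simp [Sym2.mem_map]
  rw [← ht, Subtype.ext (Sym2.ext hmem)]

lemma apply_top : τ top = top := by
  refine eq_top_of_notMem_range ?_ ?_
  · rw [apply_mem_range_vertex_iff]; rintro ⟨v, hv⟩; simp at hv
  · rw [apply_mem_range_pair_iff]; rintro ⟨s, hs⟩; simp at hs

def toGraphIso : G ≃g G' where
  toEquiv := vertexEquiv τ
  map_rel_iff' {a b} := by
    by_cases hab : a = b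
    · subst hab; simp
    let s : (completeGraph V).edgeSet := ⟨s(a, b), by simpa using hab⟩
    calc G'.Adj (vertexEquiv τ a) (vertexEquiv τ b)
        ↔ ¬ IsMax (pair (pairEquiv (vertexEquiv τ) s) : G'.IncidencePoset) := by
          simp [isMax_pair_iff, s]
      _ ↔ ¬ IsMax (pair s : G.IncidencePoset) := by rw [← apply_pair, τ.isMax_apply]
      _ ↔ G.Adj a b := by simp [isMax_pair_iff, s]

end IncidencePoset

def incidencePosetIsoEquiv [Nontrivial V] [Nontrivial W] :
    (G ≃g G') ≃ (G.IncidencePoset ≃o G'.IncidencePoset) where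
  toFun := Iso.incidencePoset
  invFun τ := toGraphIso τ
  left_inv f := by
    ext v
    exact vertex_injective ((apply_vertex f.incidencePoset v).symm : _ = vertex (f v))
  right_inv τ := by
    ext x
    induction x with
    | vertex v => exact (apply_vertex τ v).symm
    | pair s => exact (apply_pair τ s).symm
    | top => exact (apply_top τ).symm

def incidencePosetAutEquiv [Nontrivial V] :
    (G ≃g G) ≃* (G.IncidencePoset ≃o G.IncidencePoset) where
  __ := incidencePosetIsoEquiv
  map_mul' f g := by
    ext x
    induction x with
    | pair s => exact congrArg pair (Subtype.ext (by simp only [coe_pairEquiv, Sym2.map_map]; rfl))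
    | _ => rfl

end SimpleGraph

section BoolRel

variable {α : Type*}

theorem exists_perm_iff_nonempty_relIso (c c' : α → α → Bool) :
    (∃ σ : Equiv.Perm α, ∀ a b, c a b = c' (σ a) (σ b)) ↔
      Nonempty ((c · · = true) ≃r (c' · · = true)) := by
  refine ⟨fun ⟨σ, h⟩ => ⟨⟨σ, by simp [h]⟩⟩, fun ⟨f⟩ => ⟨f.toEquiv, fun a b => ?_⟩⟩
  exact Bool.eq_iff_iff.2 f.map_rel_iff.symm

def mulEquivRelIsoOfMemIff (c : α → α → Bool) (H : Subgroup (Equiv.Perm α))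
    (hH : ∀ σ, σ ∈ H ↔ ∀ a b, c a b = c (σ a) (σ b)) :
    H ≃* ((c · · = true) ≃r (c · · = true)) where
  toFun σ := ⟨σ.1, by simp [← (hH σ).1 σ.2]⟩
  invFun f := ⟨f.toEquiv, (hH _).2 fun a b => Bool.eq_iff_iff.2 f.map_rel_iff.symm⟩
  left_inv _ := rfl
  right_inv _ := rfl
  map_mul' _ _ := rfl

def RelIso.autCongr {β : Type*} {r : α → α → Prop} {s : β → β → Prop} (φ : r ≃r s) :
    (r ≃r r) ≃* (s ≃r s) where
  __ := RelIso.relIsoCongr φ φ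
  map_mul' f g := by ext; simp [RelIso.mul_apply]

end BoolRel

namespace GCode

def toSimpleGraph (g : GCode) (hg : g.IsGraph) : SimpleGraph ℕ where
  Adj a b := g a b = true
  symm := ⟨fun a b h => (hg.1 b a).trans h⟩
  loopless := ⟨fun a h => by simp [hg.2 a] at h⟩

theorem iso_iff_nonempty_iso {g g' : GCode} (hg : g.IsGraph) (hg' : g'.IsGraph) :
    g.Iso g' ↔ Nonempty (g.toSimpleGraph hg ≃g g'.toSimpleGraph hg') :=
  exists_perm_iff_nonempty_relIso g g'

def autMulEquiv {g : GCode} (hg : g.IsGraph) :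
    g.Aut ≃* (g.toSimpleGraph hg ≃g g.toSimpleGraph hg) :=
  mulEquivRelIsoOfMemIff g g.Aut fun _ => Iff.rfl

end GCode

section PosetCode

variable {P Q : Type*} [PartialOrder P] [PartialOrder Q]

open Classical in
def posetCode (e : ℕ ≃ P) : POCode := fun a b => decide (e a ≤ e b)

theorem posetCode_mem_XPO (e : ℕ ≃ P) : posetCode e ∈ XPO := by
  refine ⟨fun a => ?_, fun a b hab hba => ?_, fun a b c hab hbc => ?_⟩ <;> simp_all [posetCode]
  · exact e.injective (le_antisymm hab hba)
  · exact hab.trans hbc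

def relIsoPosetCode (e : ℕ ≃ P) : (posetCode e · · = true) ≃r ((· ≤ ·) : P → P → Prop) :=
  ⟨e, by simp [posetCode]⟩

theorem iso_posetCode_iff (e : ℕ ≃ P) (e' : ℕ ≃ Q) :
    (posetCode e).Iso (posetCode e') ↔ Nonempty (P ≃o Q) :=
  (exists_perm_iff_nonempty_relIso _ _).trans
    (RelIso.relIsoCongr (relIsoPosetCode e) (relIsoPosetCode e')).nonempty_congr

def autPosetCodeMulEquiv (e : ℕ ≃ P) : (posetCode e).Aut ≃* (P ≃o P) :=
  (mulEquivRelIsoOfMemIff _ _ fun _ => Iff.rfl).trans (RelIso.autCongr (relIsoPosetCode e))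

end PosetCode

namespace SimpleGraph

def incidencePosetEnum : ℕ ≃ ℕ ⊕ (completeGraph ℕ).edgeSet ⊕ Unit :=
  Classical.choice nonempty_equiv_of_countable

def incidencePosetCode (G : SimpleGraph ℕ) : POCode :=
  posetCode (P := G.IncidencePoset) incidencePosetEnum

theorem iso_incidencePosetCode_iff (G G' : SimpleGraph ℕ) :
    G.incidencePosetCode.Iso G'.incidencePosetCode ↔ Nonempty (G ≃g G') :=
  (iso_posetCode_iff _ _).trans incidencePosetIsoEquiv.nonempty_congr.symm

def autIncidencePosetCodeMulEquiv (G : SimpleGraph ℕ) : G.incidencePosetCode.Aut ≃* (G ≃g G) :=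
  (autPosetCodeMulEquiv _).trans incidencePosetAutEquiv.symm

theorem measurable_incidencePosetCode {X : Type*} [MeasurableSpace X] {G : X → SimpleGraph ℕ}
    (hG : ∀ a b, Measurable fun t => (G t).Adj a b) :
    Measurable fun t => (G t).incidencePosetCode := by
  refine measurable_pi_iff.2 fun a => measurable_pi_iff.2 fun b => ?_
  exact (measurable_from_top (f := fun p : Prop => @decide p (Classical.propDecidable p))).comp
    (IncidencePoset.measurable_le hG _ _)

end SimpleGraph

end

/-- **The isomorphism relation on countable graphs SPB reduces to the isomorphism relation on
countable partial orders**: a Borel reduction which moreover preserves automorphism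
groups. -/
theorem graphs_spb_reduces_to_partial_orders
    : ∃ f : {g : GCode // g ∈ XGr} → POCode, Measurable f ∧
      (∀ g, f g ∈ XPO) ∧
      (∀ g g', GCode.Iso g.1 g'.1 ↔ POCode.Iso (f g) (f g')) ∧
      (∀ g, Nonempty (GCode.Aut g.1 ≃* POCode.Aut (f g))) := by
  have hAdj (a b : ℕ) :
      Measurable fun g : {g : GCode // g ∈ XGr} => (g.1.toSimpleGraph g.2).Adj a b :=
    ((measurable_pi_apply b).comp ((measurable_pi_apply a).comp measurable_subtype_coe)).eq_const _
  refine ⟨fun g => (g.1.toSimpleGraph g.2).incidencePosetCode,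
    SimpleGraph.measurable_incidencePosetCode hAdj, fun g => posetCode_mem_XPO _,
    fun g g' => ?_, fun g => ⟨?_⟩⟩
  · rw [GCode.iso_iff_nonempty_iso g.2 g'.2, SimpleGraph.iso_incidencePosetCode_iff]
  · exact (GCode.autMulEquiv g.2).trans (SimpleGraph.autIncidencePosetCodeMulEquiv _).symm
end

section
/- Every countably infinite group has a nontrivial automorphism: if G is a group that is countable and infinite, then there exists a group automorphism φ : G → G with φ ≠ id. -/
/-!
If `G` is not abelian, conjugation by a non-central element is a nontrivial automorphism.
If `G` is abelian, inversion is an automorphism, nontrivial unless every element squares to `1`.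
In that case `G` is a vector space over `ZMod 2`; it is infinite, so any basis is infinite, and
swapping two basis vectors gives a nontrivial automorphism.
-/

theorem MulAut.conj_ne_one_of_not_commute {G : Type*} [Group G] {a b : G}
    (h : ¬Commute a b) : MulAut.conj a ≠ 1 := fun h1 =>
  h <| mul_inv_eq_iff_eq_mul.mp <| by simpa using DFunLike.congr_fun h1 b

theorem MulEquiv.inv_ne_one_of_sq_ne_one {G : Type*} [CommGroup G] {x : G} (hx : x ^ 2 ≠ 1) :
    (MulEquiv.inv G : MulAut G) ≠ 1 := by
  intro h
  have : x⁻¹ = x := DFunLike.congr_fun h x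
  exact hx (by rwa [sq, ← inv_eq_iff_mul_eq_one])

theorem Module.Basis.exists_linearEquiv_ne_refl {ι R M : Type*} [Semiring R] [Nontrivial R]
    [AddCommMonoid M] [Module R M] [Nontrivial ι] (b : Basis ι R M) :
    ∃ e : M ≃ₗ[R] M, e ≠ LinearEquiv.refl R M := by
  classical
  obtain ⟨i, j, hij⟩ := exists_pair_ne ι
  refine ⟨b.equiv b (Equiv.swap i j), fun h => hij (b.injective ?_).symm⟩
  simpa using LinearEquiv.congr_fun h (b i)

theorem Module.Basis.infinite_index {ι R M : Type*} [Semiring R] [Finite R] [AddCommMonoid M]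
    [Module R M] [Infinite M] (b : Basis ι R M) : Infinite ι := by
  refine not_finite_iff_infinite.mp fun _ => ?_
  have : Module.Finite R M := .of_basis b
  have := Module.finite_of_finite R (M := M)
  exact not_finite M

theorem CommGroup.exists_mulAut_ne_one_of_sq_eq_one {G : Type*} [CommGroup G] [Infinite G]
    (h : ∀ x : G, x ^ 2 = 1) : ∃ φ : MulAut G, φ ≠ 1 := by
  let _ : Module (ZMod 2) (Additive G) := AddCommGroup.zmodModule fun x => h x.toMul
  let b := Module.Basis.ofVectorSpace (ZMod 2) (Additive G)
  have := b.infinite_index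
  obtain ⟨e, he⟩ := b.exists_linearEquiv_ne_refl
  refine ⟨MulEquiv.toAdditive.symm e.toAddEquiv, fun h1 => he ?_⟩
  ext x
  exact DFunLike.congr_fun h1 x.toMul

theorem CommGroup.exists_mulAut_ne_one (G : Type*) [CommGroup G] [Infinite G] :
    ∃ φ : MulAut G, φ ≠ 1 := by
  by_cases h : ∀ x : G, x ^ 2 = 1
  · exact exists_mulAut_ne_one_of_sq_eq_one h
  · push Not at h
    obtain ⟨x, hx⟩ := h
    exact ⟨MulEquiv.inv G, MulEquiv.inv_ne_one_of_sq_ne_one hx⟩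

theorem countably_infinite_group_has_nontrivial_automorphism_general
    (G : Type) [Group G] [Infinite G] :
    ∃ φ : G ≃* G, ⇑φ ≠ id := by
  suffices ∃ φ : MulAut G, φ ≠ 1 from this.imp fun φ hφ h => hφ (DFunLike.coe_injective h)
  by_cases hcomm : ∀ a b : G, Commute a b
  · let _ : CommGroup G := { mul_comm := hcomm }
    exact CommGroup.exists_mulAut_ne_one G
  · push Not at hcomm
    obtain ⟨a, b, hab⟩ := hcomm
    exact ⟨MulAut.conj a, MulAut.conj_ne_one_of_not_commute hab⟩

/-- **Every countably infinite group has a nontrivial automorphism**: if `G` is a countable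
infinite group, there is a group automorphism of `G` different from the identity. -/
theorem countably_infinite_group_has_nontrivial_automorphism
    (G : Type) [Group G] [Countable G] [Infinite G] :
    ∃ φ : G ≃* G, ⇑φ ≠ id :=
  countably_infinite_group_has_nontrivial_automorphism_general G
end

section
/- Let P1 and P2 be confined planes and let f : F(P1) → F(P2) be an embedding of planes (an embedding of the associated geometric lattices) between their free projective extensions. Then f maps P1 into P2, i.e. the restriction of f to P1 takes points and lines of P1 to points and lines of P2. -/
/-!
Every point of a confined plane lies on at least three of its lines, and an embedding carries
three distinct concurrent lines to three distinct concurrent lines. Every point that the free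
extension adds lies on exactly two lines, so the image of a base point must be a base point.
-/

/-- An incidence structure: points, lines, and an incidence relation. -/
structure IncGeom where
  Point : Type
  Line : Type
  I : Point → Line → Prop

namespace IncGeom

/-- The substructure induced on a set of points and a set of lines (a candidate subplane,
with the induced incidence). -/
def restrict (G : IncGeom) (Sp : Set G.Point) (Sl : Set G.Line) : IncGeom :=
  ⟨Sp, Sl, fun p l => G.I p.1 l.1⟩

/-- `G` is a plane: every pair of distinct points determines a unique line; every pair of
distinct lines meets in at most one point; every line contains at least two points; and
there exist three non-collinear points. -/
def IsPlane (G : IncGeom) : Prop :=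
  (∀ p q : G.Point, p ≠ q → ∃! l : G.Line, G.I p l ∧ G.I q l) ∧
  (∀ l l' : G.Line, l ≠ l' → ∀ p q : G.Point,
      G.I p l → G.I p l' → G.I q l → G.I q l' → p = q) ∧
  (∀ l : G.Line, ∃ p q : G.Point, p ≠ q ∧ G.I p l ∧ G.I q l) ∧
  (∃ p q r : G.Point, p ≠ q ∧ p ≠ r ∧ q ≠ r ∧ ¬ ∃ l : G.Line, G.I p l ∧ G.I q l ∧ G.I r l)

/-- `G` is a finite confined plane: a finite plane in which every point is incident with at
least three lines and every line is non-trivial (contains at least three points). -/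
def FinConfined (G : IncGeom) : Prop :=
  Finite G.Point ∧ Finite G.Line ∧ G.IsPlane ∧
  (∀ p : G.Point, ∃ l₁ l₂ l₃ : G.Line, l₁ ≠ l₂ ∧ l₁ ≠ l₃ ∧ l₂ ≠ l₃ ∧
      G.I p l₁ ∧ G.I p l₂ ∧ G.I p l₃) ∧
  (∀ l : G.Line, ∃ p₁ p₂ p₃ : G.Point, p₁ ≠ p₂ ∧ p₁ ≠ p₃ ∧ p₂ ≠ p₃ ∧
      G.I p₁ l ∧ G.I p₂ l ∧ G.I p₃ l)

/-- `G` is confined: every point and every line of `G` lies in a finite confined subplane. -/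
def Confined (G : IncGeom) : Prop :=
  (∀ p : G.Point, ∃ (Sp : Set G.Point) (Sl : Set G.Line),
      p ∈ Sp ∧ (G.restrict Sp Sl).FinConfined) ∧
  (∀ l : G.Line, ∃ (Sp : Set G.Point) (Sl : Set G.Line),
      l ∈ Sl ∧ (G.restrict Sp Sl).FinConfined)

/-- `S` exhibits `G` as the free projective extension of the plane on the point set `S 0`
(with all lines of `G`): `G` is the union of the increasing chain `S n`, and `S (n + 1)` is
obtained from `S n` by adding, for every pair of distinct lines having no common point in
`S n`, exactly one new point incident with exactly those two lines (no new lines are ever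
added). -/
def FreeExtChain (G : IncGeom) (S : ℕ → Set G.Point) : Prop :=
  (∀ n, S n ⊆ S (n + 1)) ∧
  (⋃ n, S n) = Set.univ ∧
  (∀ n, ∀ x ∈ S (n + 1) \ S n, ∃ l l' : G.Line, l ≠ l' ∧
      (¬ ∃ p ∈ S n, G.I p l ∧ G.I p l') ∧ G.I x l ∧ G.I x l' ∧
      ∀ m : G.Line, G.I x m → m = l ∨ m = l') ∧
  (∀ n, ∀ l l' : G.Line, l ≠ l' → (¬ ∃ p ∈ S n, G.I p l ∧ G.I p l') →
      ∃! x : G.Point, x ∈ S (n + 1) \ S n ∧ G.I x l ∧ G.I x l')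

/-- An embedding of incidence structures, phrased as an embedding of the associated
geometric lattices of length 3: injections on points and lines which preserve and reflect
incidence, send the join (`= 1`) of two points lying on no common line to `1` (the images
lie on no common line), and send the meet (`= 0`) of two lines with no common point to `0`
(the images have no common point). Joins of distinct points lying on a common line and
meets of distinct lines with a common point are preserved by the incidence condition. -/
structure Emb (G G' : IncGeom) where
  fp : G.Point → G'.Point
  fl : G.Line → G'.Line
  fp_inj : Function.Injective fp
  fl_inj : Function.Injective fl
  incid_iff : ∀ p l, G.I p l ↔ G'.I (fp p) (fl l)
  join_top : ∀ p q : G.Point, p ≠ q → (¬ ∃ l, G.I p l ∧ G.I q l) →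
      ¬ ∃ l', G'.I (fp p) l' ∧ G'.I (fp q) l'
  meet_bot : ∀ l m : G.Line, l ≠ m → (¬ ∃ p, G.I p l ∧ G.I p m) →
      ¬ ∃ p', G'.I p' (fl l) ∧ G'.I p' (fl m)

def IsThickPoint (G : IncGeom) (p : G.Point) : Prop :=
  ∃ l₁ l₂ l₃ : G.Line, l₁ ≠ l₂ ∧ l₁ ≠ l₃ ∧ l₂ ≠ l₃ ∧ G.I p l₁ ∧ G.I p l₂ ∧ G.I p l₃

variable {G G' : IncGeom}

theorem IsThickPoint.of_restrict {Sp : Set G.Point} {Sl : Set G.Line} {p : Sp}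
    (h : (G.restrict Sp Sl).IsThickPoint p) : G.IsThickPoint p.1 := by
  obtain ⟨l₁, l₂, l₃, h₁₂, h₁₃, h₂₃, hp₁, hp₂, hp₃⟩ := h
  exact ⟨l₁.1, l₂.1, l₃.1, Subtype.coe_injective.ne h₁₂, Subtype.coe_injective.ne h₁₃,
    Subtype.coe_injective.ne h₂₃, hp₁, hp₂, hp₃⟩

theorem Confined.isThickPoint (hG : G.Confined) (p : G.Point) : G.IsThickPoint p := by
  obtain ⟨Sp, Sl, hp, hfin⟩ := hG.1 p
  exact IsThickPoint.of_restrict (p := ⟨p, hp⟩) (hfin.2.2.2.1 ⟨p, hp⟩)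

theorem Emb.isThickPoint_map (f : Emb G G') {p : G.Point} (h : G.IsThickPoint p) :
    G'.IsThickPoint (f.fp p) := by
  obtain ⟨l₁, l₂, l₃, h₁₂, h₁₃, h₂₃, hp₁, hp₂, hp₃⟩ := h
  exact ⟨f.fl l₁, f.fl l₂, f.fl l₃, f.fl_inj.ne h₁₂, f.fl_inj.ne h₁₃, f.fl_inj.ne h₂₃,
    (f.incid_iff p l₁).1 hp₁, (f.incid_iff p l₂).1 hp₂, (f.incid_iff p l₃).1 hp₃⟩

theorem FreeExtChain.not_isThickPoint_of_mem_diff {S : ℕ → Set G.Point}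
    (hS : G.FreeExtChain S) {n : ℕ} {x : G.Point} (hx : x ∈ S (n + 1) \ S n) :
    ¬ G.IsThickPoint x := by
  rintro ⟨l₁, l₂, l₃, h₁₂, h₁₃, h₂₃, hx₁, hx₂, hx₃⟩
  obtain ⟨l, l', -, -, -, -, hlines⟩ := hS.2.2.1 n x hx
  rcases hlines l₁ hx₁ with rfl | rfl <;> rcases hlines l₂ hx₂ with rfl | rfl <;>
    rcases hlines l₃ hx₃ with rfl | rfl <;> contradiction

theorem FreeExtChain.mem_zero_of_isThickPoint {S : ℕ → Set G.Point}
    (hS : G.FreeExtChain S) {x : G.Point} (hx : G.IsThickPoint x) : x ∈ S 0 := by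
  obtain ⟨n, hn⟩ := Set.mem_iUnion.1 (hS.2.1 ▸ Set.mem_univ x)
  induction n with
  | zero => exact hn
  | succ n ih =>
    by_contra hx₀
    exact hS.not_isThickPoint_of_mem_diff ⟨hn, fun h => hx₀ (ih h)⟩ hx

end IncGeom

theorem embedding_of_free_extensions_restricts_to_base_general
    (Q₁ Q₂ : IncGeom) (S₁ : ℕ → Set Q₁.Point) (S₂ : ℕ → Set Q₂.Point)
    (h₁conf : (Q₁.restrict (S₁ 0) Set.univ).Confined)
    (h₂free : Q₂.FreeExtChain S₂)
    (f : IncGeom.Emb Q₁ Q₂) :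
    (∀ p ∈ S₁ 0, f.fp p ∈ S₂ 0) ∧
    (∀ l : Q₁.Line, f.fl l ∈ (Set.univ : Set Q₂.Line)) :=
  ⟨fun p hp => h₂free.mem_zero_of_isThickPoint
      (f.isThickPoint_map (h₁conf.isThickPoint ⟨p, hp⟩).of_restrict),
    fun l => Set.mem_univ (f.fl l)⟩

/-- **An embedding between free projective extensions of confined planes maps the base plane
into the base plane.** Let `Q₁ = F(P₁)` and `Q₂ = F(P₂)` be free projective extensions of
confined planes `P₁` (the restriction of `Q₁` to the points `S₁ 0`, with all lines) and
`P₂` (the restriction of `Q₂` to the points `S₂ 0`, with all lines). Then any embedding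
`f : F(P₁) → F(P₂)` of the associated geometric lattices takes points of `P₁` to points of
`P₂` (and, trivially, lines of `P₁` to lines of `P₂`). -/
theorem embedding_of_free_extensions_restricts_to_base
    (Q₁ Q₂ : IncGeom) (S₁ : ℕ → Set Q₁.Point) (S₂ : ℕ → Set Q₂.Point)
    (h₁plane : (Q₁.restrict (S₁ 0) Set.univ).IsPlane)
    (h₁conf : (Q₁.restrict (S₁ 0) Set.univ).Confined)
    (h₂plane : (Q₂.restrict (S₂ 0) Set.univ).IsPlane)
    (h₂conf : (Q₂.restrict (S₂ 0) Set.univ).Confined)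
    (h₁free : Q₁.FreeExtChain S₁) (h₂free : Q₂.FreeExtChain S₂)
    (f : IncGeom.Emb Q₁ Q₂) :
    (∀ p ∈ S₁ 0, f.fp p ∈ S₂ 0) ∧
    (∀ l : Q₁.Line, f.fl l ∈ (Set.univ : Set Q₂.Line)) :=
  embedding_of_free_extensions_restricts_to_base_general Q₁ Q₂ S₁ S₂ h₁conf h₂free f
end
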